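/- For t ∈ (0,1), the projection π_t : D → ℝ, π_t(f) := f(t), is continuous at f ∈ D with respect to the metric d_{J1} if and only if f is continuous at t. The projections π_0 and π_1 are continuous at every f ∈ D with respect to d_{J1}. -/

import Mathlib

open Set Filter Topology

noncomputable section

/-- The unit interval `[0,1] ⊆ ℝ`, as a type. -/
abbrev unitI : Type := ↥(Set.Icc (0:ℝ) 1)

/-- The point `0` of the unit interval. -/
def i0 : unitI := ⟨0, by norm_num⟩

/-- The point `1` of the unit interval. -/
def i1 : unitI := ⟨1, by norm_num⟩

/-- A function `f : [0,1] → ℝ` is càdlàg if it is right-continuous at every point and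
has a left limit at every point (both conditions being vacuous where the corresponding
one-sided neighbourhood filter is trivial). -/
def Cadlag (f : unitI → ℝ) : Prop :=
  (∀ t : unitI, Tendsto f (𝓝[>] t) (𝓝 (f t))) ∧
  (∀ t : unitI, ∃ L : ℝ, Tendsto f (𝓝[<] t) (𝓝 L))

/-- The Skorokhod space `D` of càdlàg functions `[0,1] → ℝ`. -/
def D : Type := {f : unitI → ℝ // Cadlag f}

/-- A time change: a strictly increasing bijection `λ : [0,1] → [0,1]`. -/
def TimeChange (l : unitI → unitI) : Prop := StrictMono l ∧ Function.Bijective l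

/-- The Skorokhod `J₁` metric
`d_{J1}(f,g) = inf_λ ( sup_t |f(λ t) - g t| + sup_t |λ t - t| )`. -/
def dJ1 (f g : D) : ℝ :=
  sInf {x : ℝ | ∃ l : unitI → unitI, TimeChange l ∧
    x = (⨆ t : unitI, |f.1 (l t) - g.1 t|) + ⨆ t : unitI, |(l t : ℝ) - (t : ℝ)|}

/-!
If `λ` is a time change moving `t` to a slightly earlier `t'` with `|λ s - s| ≤ t - t'`, then
`f ∘ λ` is within `d_{J1}`-distance `t - t'` of `f` and takes the value `f t'` at `t`; so
continuity of `π_t` at `f` forces `f` to be left continuous, hence continuous, at `t`. Conversely,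
`d_{J1} f g < δ` provides a time change `λ` with `g t` close to `f (λ t)` and `λ t` close to `t`,
and `λ` fixes `0` and `1`.
-/

theorem bddAbove_range_of_isBoundedUnder_nhds {X α : Type*} [TopologicalSpace X] [CompactSpace X]
    [Preorder α] [IsDirectedOrder α] [Nonempty α] {u : X → α}
    (h : ∀ x, (𝓝 x).IsBoundedUnder (· ≤ ·) u) : BddAbove (range u) := by
  rw [← image_univ]
  refine isCompact_univ.induction_on (p := fun s => BddAbove (u '' s)) (by simp)
    (fun s t hst ht => ht.mono (image_mono hst))
    (fun s t hs ht => by rw [image_union]; exact hs.union ht) fun x _ => ?_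
  obtain ⟨s, hs, hxs⟩ := isBoundedUnder_iff_eventually_bddAbove.1 (h x)
  exact ⟨s, nhdsWithin_le_nhds hxs, hs⟩

namespace Cadlag

variable {f : unitI → ℝ}

theorem isBoundedUnder_abs (hf : Cadlag f) (t : unitI) :
    (𝓝 t).IsBoundedUnder (· ≤ ·) fun s => |f s| := by
  obtain ⟨L, hL⟩ := hf.2 t
  have hright : Tendsto f (𝓝[≥] t) (𝓝 (f t)) := continuousWithinAt_Ioi_iff_Ici.1 (hf.1 t)
  rw [← nhdsLT_sup_nhdsGE t, IsBoundedUnder, map_sup]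
  exact isBounded_sup hL.abs.isBoundedUnder_le hright.abs.isBoundedUnder_le

theorem exists_abs_le (hf : Cadlag f) : ∃ M, ∀ s, |f s| ≤ M := by
  obtain ⟨M, hM⟩ := bddAbove_range_of_isBoundedUnder_nhds hf.isBoundedUnder_abs
  exact ⟨M, fun s => hM (mem_range_self s)⟩

end Cadlag

namespace TimeChange

variable {l : unitI → unitI}

theorem continuous (hl : TimeChange l) : Continuous l :=
  hl.1.monotone.continuous_of_surjective hl.2.2

theorem map_i0 (hl : TimeChange l) : l i0 = i0 :=
  (hl.1.orderIsoOfSurjective l hl.2.2).map_bot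

theorem map_i1 (hl : TimeChange l) : l i1 = i1 :=
  (hl.1.orderIsoOfSurjective l hl.2.2).map_top

end TimeChange

theorem Cadlag.comp_timeChange {f : unitI → ℝ} {l : unitI → unitI} (hf : Cadlag f)
    (hl : TimeChange l) : Cadlag (f ∘ l) := by
  have hright (t : unitI) : Tendsto l (𝓝[>] t) (𝓝[>] (l t)) :=
    hl.continuous.continuousWithinAt.tendsto_nhdsWithin fun _ hs => hl.1 hs
  have hleft (t : unitI) : Tendsto l (𝓝[<] t) (𝓝[<] (l t)) :=
    hl.continuous.continuousWithinAt.tendsto_nhdsWithin fun _ hs => hl.1 hs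
  refine ⟨fun t => (hf.1 (l t)).comp (hright t), fun t => ?_⟩
  obtain ⟨L, hL⟩ := hf.2 (l t)
  exact ⟨L, hL.comp (hleft t)⟩

theorem exists_timeChange_of_strictMono {φ : ℝ → ℝ} (hφ : StrictMono φ) (hc : Continuous φ)
    (h0 : φ 0 = 0) (h1 : φ 1 = 1) : ∃ l : unitI → unitI, TimeChange l ∧ ∀ s, (l s : ℝ) = φ s := by
  have hmaps : MapsTo φ (Icc 0 1) (Icc 0 1) := by
    simpa only [h0, h1] using hφ.monotone.mapsTo_Icc (a := 0) (b := 1)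
  have hsurj : SurjOn φ (Icc 0 1) (Icc 0 1) := by
    simpa only [h0, h1] using hc.continuousOn.surjOn_Icc (s := Icc 0 1)
      (left_mem_Icc.2 zero_le_one) (right_mem_Icc.2 zero_le_one)
  have hmono : StrictMono (hmaps.restrict φ _ _) := fun _ _ hst => hφ hst
  exact ⟨_, ⟨hmono, hmono.injective, hmaps.restrict_surjective_iff.2 hsurj⟩, fun _ => rfl⟩

section Pivot

variable {t t' : ℝ}

/-- The piecewise linear map through `(0,0)`, `(t,t')` and `(1,1)`; for `t' < t` it is convex,
hence the maximum of its two linear pieces. -/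
def pivot (t t' s : ℝ) : ℝ := max (t' / t * s) (1 - (1 - t') / (1 - t) * (1 - s))

theorem pivot_slopes (h0 : 0 < t') (h1 : t' < t) (h2 : t < 1) :
    0 < t' / t ∧ t' / t * t = t' ∧ 0 < (1 - t') / (1 - t) ∧
      (1 - t') / (1 - t) * (1 - t) = 1 - t' := by
  have ht : 0 < t := h0.trans h1
  have ht' : 0 < 1 - t := by linarith
  exact ⟨by positivity, div_mul_cancel₀ _ ht.ne', div_pos (by linarith) ht',
    div_mul_cancel₀ _ ht'.ne'⟩

theorem pivot_strictMono (h0 : 0 < t') (h1 : t' < t) (h2 : t < 1) : StrictMono (pivot t t') := by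
  obtain ⟨hk, -, hc, -⟩ := pivot_slopes h0 h1 h2
  intro a b hab
  exact max_lt_max (by gcongr) (by gcongr)

theorem continuous_pivot : Continuous (pivot t t') := by
  unfold pivot; fun_prop

theorem pivot_zero (h0 : 0 < t') (h1 : t' < t) (h2 : t < 1) : pivot t t' 0 = 0 := by
  obtain ⟨-, -, -, hc⟩ := pivot_slopes h0 h1 h2
  unfold pivot; rw [max_eq_left] <;> nlinarith

theorem pivot_one (h0 : 0 < t') (h1 : t' < t) (h2 : t < 1) : pivot t t' 1 = 1 := by
  obtain ⟨-, hk, -, -⟩ := pivot_slopes h0 h1 h2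
  unfold pivot; rw [max_eq_right] <;> nlinarith

theorem pivot_self (h0 : 0 < t') (h1 : t' < t) (h2 : t < 1) : pivot t t' t = t' := by
  obtain ⟨-, hk, -, hc⟩ := pivot_slopes h0 h1 h2
  rw [pivot, hk, hc, sub_sub_cancel, max_self]

theorem abs_pivot_sub_le (h0 : 0 < t') (h1 : t' < t) (h2 : t < 1) {s : ℝ} (hs : s ∈ Icc 0 1) :
    |pivot t t' s - s| ≤ t - t' := by
  obtain ⟨hk0, hk, hc0, hc⟩ := pivot_slopes h0 h1 h2
  obtain ⟨hs0, hs1⟩ := hs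
  refine abs_le.2 ⟨?_, ?_⟩
  · rcases le_total s t with hst | hst
    · have := le_max_left (t' / t * s) (1 - (1 - t') / (1 - t) * (1 - s))
      unfold pivot; nlinarith
    · have := le_max_right (t' / t * s) (1 - (1 - t') / (1 - t) * (1 - s))
      unfold pivot; nlinarith
  · have : pivot t t' s ≤ s := max_le (by nlinarith) (by nlinarith)
    linarith

end Pivot

theorem exists_timeChange_apply_eq {t t' : unitI} (h0 : 0 < (t' : ℝ)) (h1 : t' < t)
    (h2 : (t : ℝ) < 1) : ∃ l : unitI → unitI, TimeChange l ∧ l t = t' ∧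
      ∀ s, |(l s : ℝ) - s| ≤ t - t' := by
  obtain ⟨l, hl, hlφ⟩ := exists_timeChange_of_strictMono (pivot_strictMono h0 h1 h2)
    continuous_pivot (pivot_zero h0 h1 h2) (pivot_one h0 h1 h2)
  refine ⟨l, hl, Subtype.ext ((hlφ t).trans (pivot_self h0 h1 h2)), fun s => ?_⟩
  rw [hlφ]
  exact abs_pivot_sub_le h0 h1 h2 s.2

theorem dJ1_le_of_timeChange (f g : D) {l : unitI → unitI} (hl : TimeChange l) :
    dJ1 f g ≤ (⨆ t : unitI, |f.1 (l t) - g.1 t|) + ⨆ t : unitI, |(l t : ℝ) - (t : ℝ)| := by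
  refine csInf_le ⟨0, ?_⟩ ⟨l, hl, rfl⟩
  rintro _ ⟨l, -, rfl⟩
  exact add_nonneg (Real.iSup_nonneg fun _ => abs_nonneg _)
    (Real.iSup_nonneg fun _ => abs_nonneg _)

theorem dJ1_comp_timeChange_le (f : D) {l : unitI → unitI} (hl : TimeChange l) {c : ℝ}
    (hc : ∀ s, |(l s : ℝ) - s| ≤ c) : dJ1 f ⟨f.1 ∘ l, f.2.comp_timeChange hl⟩ ≤ c := by
  simpa using (dJ1_le_of_timeChange f ⟨f.1 ∘ l, f.2.comp_timeChange hl⟩ hl).trans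
    (by simpa using ciSup_le hc)

-- The bounds of `Cadlag.exists_abs_le` are needed because `⨆` of an unbounded family is `0`.
theorem exists_timeChange_of_dJ1_lt {f g : D} {δ : ℝ} (h : dJ1 f g < δ) :
    ∃ l : unitI → unitI, TimeChange l ∧ ∀ s, |f.1 (l s) - g.1 s| < δ ∧ |(l s : ℝ) - s| < δ := by
  obtain ⟨_, ⟨l, hl, rfl⟩, hlt⟩ :=
    exists_lt_of_csInf_lt (by exact ⟨_, id, ⟨strictMono_id, Function.bijective_id⟩, rfl⟩) h
  obtain ⟨Mf, hMf⟩ := f.2.exists_abs_le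
  obtain ⟨Mg, hMg⟩ := g.2.exists_abs_le
  have hdiff : BddAbove (range fun s => |f.1 (l s) - g.1 s|) :=
    ⟨Mf + Mg, by rintro _ ⟨s, rfl⟩; exact (abs_sub _ _).trans (add_le_add (hMf _) (hMg _))⟩
  have hshift : BddAbove (range fun s : unitI => |(l s : ℝ) - s|) :=
    ⟨1, by rintro _ ⟨s, rfl⟩; exact abs_sub_le_of_nonneg_of_le (l s).2.1 (l s).2.2 s.2.1 s.2.2⟩
  have hdiff0 := Real.iSup_nonneg fun s => abs_nonneg (f.1 (l s) - g.1 s)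
  have hshift0 := Real.iSup_nonneg fun s : unitI => abs_nonneg ((l s : ℝ) - s)
  refine ⟨l, hl, fun s => ⟨?_, ?_⟩⟩
  · linarith [le_ciSup hdiff s]
  · linarith [le_ciSup hshift s]

def ProjectionContinuousAt (t : unitI) (f : D) : Prop :=
  ∀ ε : ℝ, 0 < ε → ∃ δ : ℝ, 0 < δ ∧ ∀ g : D, dJ1 f g < δ → |g.1 t - f.1 t| < ε

theorem projectionContinuousAt_of_continuousAt {t : unitI} {f : D} (hf : ContinuousAt f.1 t) :
    ProjectionContinuousAt t f := by
  intro ε hε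
  obtain ⟨η, hη, hfη⟩ := Metric.continuousAt_iff.1 hf (ε / 2) (half_pos hε)
  refine ⟨min η (ε / 2), by positivity, fun g hg => ?_⟩
  obtain ⟨l, -, hl⟩ := exists_timeChange_of_dJ1_lt hg
  have hfg : |f.1 (l t) - g.1 t| < ε / 2 := (hl t).1.trans_le (min_le_right _ _)
  have hf : |f.1 (l t) - f.1 t| < ε / 2 := hfη ((hl t).2.trans_le (min_le_left _ _))
  calc |g.1 t - f.1 t| ≤ |g.1 t - f.1 (l t)| + |f.1 (l t) - f.1 t| := abs_sub_le _ _ _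
    _ < ε := by rw [abs_sub_comm] at hfg; linarith

theorem projectionContinuousAt_of_forall_timeChange {t : unitI}
    (ht : ∀ l, TimeChange l → l t = t) (f : D) : ProjectionContinuousAt t f := by
  intro ε hε
  refine ⟨ε, hε, fun g hg => ?_⟩
  obtain ⟨l, hl, hfg⟩ := exists_timeChange_of_dJ1_lt hg
  simpa only [ht l hl, abs_sub_comm] using (hfg t).1

theorem ProjectionContinuousAt.tendsto_nhdsLT {t : unitI} {f : D} (h : ProjectionContinuousAt t f)
    (ht0 : 0 < (t : ℝ)) (ht1 : (t : ℝ) < 1) : Tendsto f.1 (𝓝[<] t) (𝓝 (f.1 t)) := by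
  refine Metric.tendsto_nhds.2 fun ε hε => ?_
  obtain ⟨δ, hδ, hfg⟩ := h ε hε
  have hnear : ∀ᶠ s : unitI in 𝓝 t, (t : ℝ) - δ < s ∧ 0 < (s : ℝ) :=
    continuous_subtype_val.continuousAt.eventually
      ((eventually_gt_nhds (by linarith)).and (eventually_gt_nhds ht0))
  filter_upwards [self_mem_nhdsWithin, nhdsWithin_le_nhds hnear] with s hst ⟨hsδ, hs0⟩
  obtain ⟨l, hl, hlt, hls⟩ := exists_timeChange_apply_eq hs0 hst ht1
  have hd : dJ1 f ⟨f.1 ∘ l, f.2.comp_timeChange hl⟩ < δ :=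
    (dJ1_comp_timeChange_le f hl hls).trans_lt (by linarith)
  simpa only [Real.dist_eq, Function.comp_apply, hlt] using hfg _ hd

/-- For `t ∈ (0,1)` the projection `π_t : D → ℝ`, `π_t(f) = f(t)`, is
continuous at `f` with respect to `d_{J1}` iff `f` is continuous at `t`; the
projections `π_0` and `π_1` are continuous at every `f ∈ D`. -/
theorem projection_continuousAt_iff :
    (∀ t : unitI, 0 < (t : ℝ) → (t : ℝ) < 1 → ∀ f : D,
      ((∀ ε : ℝ, 0 < ε → ∃ δ : ℝ, 0 < δ ∧
          ∀ g : D, dJ1 f g < δ → |g.1 t - f.1 t| < ε) ↔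
        ContinuousAt f.1 t)) ∧
    (∀ f : D, ∀ ε : ℝ, 0 < ε → ∃ δ : ℝ, 0 < δ ∧
      ∀ g : D, dJ1 f g < δ → |g.1 i0 - f.1 i0| < ε) ∧
    (∀ f : D, ∀ ε : ℝ, 0 < ε → ∃ δ : ℝ, 0 < δ ∧
      ∀ g : D, dJ1 f g < δ → |g.1 i1 - f.1 i1| < ε) := by
  refine ⟨fun t ht0 ht1 f => ⟨fun h => ?_, projectionContinuousAt_of_continuousAt⟩,
    projectionContinuousAt_of_forall_timeChange fun _ hl => hl.map_i0,
    projectionContinuousAt_of_forall_timeChange fun _ hl => hl.map_i1⟩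
  exact continuousAt_iff_continuous_left'_right'.2
    ⟨ProjectionContinuousAt.tendsto_nhdsLT h ht0 ht1, f.2.1 t⟩
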